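/- arXiv:1012.3529 — 2 statements merged into one kernel-verified Lean document; each statement's English description precedes it below -/
import Mathlib

section
/- Let δ > 0, u ∈ H¹₀(Ω; ℝⁿ), θ a vector field supported in the boundary strip Γ_δ with |ρ²∇θ|_{L^∞(Γ_δ)} ≤ Cδ, where ρ = dist(·,∂Ω). Then |∫_Ω ((u·∇)θ)·u dx| ≤ C′ δ |∇u|²_{L²(Γ_δ)} for a constant C′ independent of δ, via the pointwise rewriting ((u·∇)θ)·u = ((u/ρ)·(ρ²∇)θ)·(u/ρ) and Hardy's inequality applied on Γ_δ. -/
/-!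
On the strip `Γ_δ`, `((u·∇)θ)·u = ((u/ρ)·(ρ²∇)θ)·(u/ρ)` is bounded by `Cδ |u/ρ|²`; integrating
and applying the Hardy bound gives `C' = C·C_H`. Off `Γ_δ` the derivative of `θ` vanishes except
on the level set `{ρ = δ}`, which is null: at each of its points it misses a ball of comparable
size on the side of the nearest boundary point, so it has no Lebesgue density point. Since `u` is
Lipschitz and vanishes on `∂Ω`, `|u/ρ|²` is bounded, so the Hardy integral is a genuine integral.
-/

open Filter MeasureTheory Metric Set Topology
open scoped Pointwise

namespace MeasureTheory.Measure

variable {E : Type*} [NormedAddCommGroup E] [NormedSpace ℝ E] [FiniteDimensional ℝ E]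
  [MeasurableSpace E] [BorelSpace E] (μ : Measure E) [μ.IsAddHaarMeasure]

/-- No point of `s` can be a Lebesgue density point of `s`. -/
theorem addHaar_eq_zero_of_eventually_disjoint_smul {s : Set E} (hs : MeasurableSet s)
    (h : ∀ x ∈ s, ∃ t, MeasurableSet t ∧ μ t ≠ 0 ∧
      ∀ᶠ r in 𝓝[>] (0 : ℝ), Disjoint s ({x} + r • t)) :
    μ s = 0 := by
  have : ∀ᵐ x ∂μ.restrict s, False := by
    filter_upwards [Besicovitch.ae_tendsto_measure_inter_div μ s, ae_restrict_mem hs]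
      with x hx hxs
    obtain ⟨t, ht, hμt, hdisj⟩ := h x hxs
    obtain ⟨r, hr_meets, hr_disj⟩ :=
      ((eventually_nonempty_inter_smul_of_density_one μ s x hx t ht hμt).and hdisj).exists
    exact not_disjoint_iff_nonempty_inter.2 hr_meets hr_disj
  exact Measure.restrict_eq_zero.1 (ae_eq_bot.1 (eventually_false_iff_eq_bot.1 this))

theorem addHaar_infDist_eq {F : Set E} (hF : IsClosed F) {c : ℝ} (hc : 0 < c) :
    μ {x | infDist x F = c} = 0 := by
  refine addHaar_eq_zero_of_eventually_disjoint_smul μ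
    (isClosed_eq (continuous_infDist_pt F) continuous_const).measurableSet fun x hx => ?_
  have hF_ne : F.Nonempty := nonempty_iff_ne_empty.2 fun hF_empty => by
    simp [hF_empty, hc.ne] at hx
  obtain ⟨p, hpF, hxp⟩ := hF.exists_infDist_eq_dist hF_ne x
  replace hx : ‖p - x‖ = c := by rw [← dist_eq_norm', ← hxp]; exact hx
  -- `p` is a nearest point of `F`; the points of `x + r • ball (p - x) (c / 2)` lie within
  -- `c - r c / 2` of it
  refine ⟨ball (p - x) (c / 2), measurableSet_ball, (measure_ball_pos μ _ (by positivity)).ne',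
    ?_⟩
  filter_upwards [Ioo_mem_nhdsGT zero_lt_one] with r ⟨hr0, hr1⟩
  rw [singleton_add, disjoint_right]
  rintro _ ⟨_, ⟨w, hw, rfl⟩, rfl⟩ (hy : infDist _ F = c)
  rw [mem_ball, dist_eq_norm] at hw
  have hclose : dist (x + r • w) p < c := by
    rw [dist_eq_norm, show x + r • w - p = r • (w - (p - x)) - (1 - r) • (p - x) by module]
    calc ‖r • (w - (p - x)) - (1 - r) • (p - x)‖
        ≤ r * ‖w - (p - x)‖ + (1 - r) * ‖p - x‖ := by
          refine (norm_sub_le _ _).trans ?_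
          rw [norm_smul, norm_smul, Real.norm_of_nonneg hr0.le,
            Real.norm_of_nonneg (by linarith)]
      _ < c := by nlinarith
  exact (infDist_le_dist_of_mem hpF).not_gt (hy ▸ hclose)

end MeasureTheory.Measure

theorem LipschitzWith.norm_le_mul_infDist {X F : Type*} [MetricSpace X] [ProperSpace X]
    [SeminormedAddCommGroup F] {u : X → F} {K : NNReal} (hu : LipschitzWith K u) {s : Set X}
    (hs : IsClosed s) (hs_ne : s.Nonempty) (h0 : ∀ y ∈ s, u y = 0) (x : X) :
    ‖u x‖ ≤ K * infDist x s := by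
  obtain ⟨p, hps, hxp⟩ := hs.exists_infDist_eq_dist hs_ne x
  simpa [h0 p hps, hxp, dist_eq_norm] using hu.dist_le_mul x p

theorem LipschitzWith.integrableOn_norm_sq_div_infDist_sq {X F : Type*} [MetricSpace X]
    [ProperSpace X] [MeasurableSpace X] [OpensMeasurableSpace X] [SeminormedAddCommGroup F]
    {μ : Measure X} {u : X → F} {K : NNReal} (hu : LipschitzWith K u) {s t : Set X}
    (hs : IsClosed s) (hs_ne : s.Nonempty) (h0 : ∀ y ∈ s, u y = 0) (ht : μ t ≠ ⊤) :
    IntegrableOn (fun x => ‖u x‖ ^ 2 / infDist x s ^ 2) t μ := by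
  refine Measure.integrableOn_of_bounded (M := K ^ 2) ht
    ((hu.continuous.norm.pow 2).measurable.div
      ((continuous_infDist_pt s).pow 2).measurable).aestronglyMeasurable
    (ae_of_all _ fun x => ?_)
  rw [Real.norm_of_nonneg (by positivity)]
  refine div_le_of_le_mul₀ (by positivity) (by positivity) ?_
  rw [← mul_pow]
  exact pow_le_pow_left₀ (norm_nonneg _) (hu.norm_le_mul_infDist hs hs_ne h0 x) 2

theorem abs_inner_apply_le_of_sq_mul_opNorm_le {E : Type*} [NormedAddCommGroup E]
    [InnerProductSpace ℝ E] (A : E →L[ℝ] E) (v : E) {ρ M : ℝ} (hρ : 0 < ρ)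
    (hA : ρ ^ 2 * ‖A‖ ≤ M) :
    |inner ℝ (A v) v| ≤ M * (‖v‖ ^ 2 / ρ ^ 2) :=
  calc |inner ℝ (A v) v| ≤ ‖A v‖ * ‖v‖ := abs_real_inner_le_norm _ _
    _ ≤ ‖A‖ * ‖v‖ * ‖v‖ := by gcongr; exact A.le_opNorm v
    _ = ρ ^ 2 * ‖A‖ * (‖v‖ ^ 2 / ρ ^ 2) := by field_simp
    _ ≤ M * (‖v‖ ^ 2 / ρ ^ 2) := by gcongr

section BoundaryStrip

variable {X : Type*} [MetricSpace X]

def boundaryStrip (Ω : Set X) (δ : ℝ) : Set X :=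
  {y ∈ Ω | infDist y (frontier Ω) < δ}

theorem boundaryStrip_subset (Ω : Set X) (δ : ℝ) : boundaryStrip Ω δ ⊆ Ω :=
  sep_subset _ _

theorem IsOpen.boundaryStrip {Ω : Set X} (hΩ : IsOpen Ω) (δ : ℝ) :
    IsOpen (boundaryStrip Ω δ) :=
  hΩ.inter (isOpen_lt (continuous_infDist_pt _) continuous_const)

variable {E : Type*} [NormedAddCommGroup E] [InnerProductSpace ℝ E] [FiniteDimensional ℝ E]
  [MeasurableSpace E] [BorelSpace E] (μ : Measure E) [μ.IsAddHaarMeasure] {Ω : Set E} {δ : ℝ}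

/-- The level set `{ρ = δ}` is null, and off it `θ` vanishes on a neighbourhood of each point
of `Ω \ Γ_δ`. -/
theorem ae_fderiv_eq_zero_of_eqOn_zero_off_boundaryStrip {F : Type*} [NormedAddCommGroup F]
    [NormedSpace ℝ F] (hΩ : IsOpen Ω) (hδ : 0 < δ) {θ : E → F}
    (hθ : ∀ x ∈ Ω, x ∉ boundaryStrip Ω δ → θ x = 0) :
    ∀ᵐ x ∂μ, x ∈ Ω \ boundaryStrip Ω δ → fderiv ℝ θ x = 0 := by
  filter_upwards [measure_eq_zero_iff_ae_notMem.1
    (Measure.addHaar_infDist_eq μ isClosed_frontier hδ)] with x hx_ne ⟨hxΩ, hxΓ⟩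
  have hx_far : δ < infDist x (frontier Ω) :=
    lt_of_le_of_ne (not_lt.1 fun h => hxΓ ⟨hxΩ, h⟩) (Ne.symm hx_ne)
  have hθ_nhds : θ =ᶠ[𝓝 x] fun _ => 0 := by
    filter_upwards [(hΩ.inter (isOpen_lt continuous_const (continuous_infDist_pt _))).mem_nhds
      ⟨hxΩ, hx_far⟩] with y ⟨hyΩ, hy_far⟩
    exact hθ y hyΩ fun hyΓ => hyΓ.2.not_gt hy_far
  rw [hθ_nhds.fderiv_eq, fderiv_const_apply]

theorem abs_setIntegral_inner_fderiv_le (hΩ : IsOpen Ω) (hF : (frontier Ω).Nonempty)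
    (hδ : 0 < δ) {u θ : E → E} {M : ℝ} (hθ0 : ∀ x ∈ Ω, x ∉ boundaryStrip Ω δ → θ x = 0)
    (hθ : ∀ x ∈ boundaryStrip Ω δ, infDist x (frontier Ω) ^ 2 * ‖fderiv ℝ θ x‖ ≤ M)
    (hu : IntegrableOn (fun x => ‖u x‖ ^ 2 / infDist x (frontier Ω) ^ 2)
      (boundaryStrip Ω δ) μ) :
    |∫ x in Ω, inner ℝ (fderiv ℝ θ x (u x)) (u x) ∂μ|
      ≤ M * ∫ x in boundaryStrip Ω δ, ‖u x‖ ^ 2 / infDist x (frontier Ω) ^ 2 ∂μ := by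
  rw [setIntegral_eq_of_subset_of_ae_sdiff_eq_zero hΩ.measurableSet.nullMeasurableSet
    (boundaryStrip_subset Ω δ) (by
      filter_upwards [ae_fderiv_eq_zero_of_eqOn_zero_off_boundaryStrip μ hΩ hδ hθ0] with x hx hxΩ
      simp [hx hxΩ]), ← integral_const_mul, ← Real.norm_eq_abs]
  refine norm_integral_le_of_norm_le (hu.const_mul M)
    (ae_restrict_of_forall_mem (hΩ.boundaryStrip δ).measurableSet fun x hx => ?_)
  have hx_pos : 0 < infDist x (frontier Ω) := by
    rw [← isClosed_frontier.notMem_iff_infDist_pos hF, hΩ.frontier_eq]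
    exact fun hx_fr => hx_fr.2 hx.1
  exact abs_inner_apply_le_of_sq_mul_opNorm_le _ _ hx_pos (hθ x hx)

end BoundaryStrip

/-- Kato's boundary-layer estimate: if `u ∈ H¹₀(Ω;ℝⁿ)`, `θ` is supported in the boundary
strip `Γ_δ` with `|ρ²∇θ|_{L^∞(Γ_δ)} ≤ Cδ`, and the Hardy-type bound
`|u/ρ|²_{L²(Γ_δ)} ≤ C_H |∇u|²_{L²(Γ_δ)}` holds, then
`|∫_Ω ((u·∇)θ)·u dx| ≤ C' δ |∇u|²_{L²(Γ_δ)}` with `C'` independent of `δ`. -/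
theorem kato_boundary_layer_estimate {n : ℕ}
    (Ω : Set (EuclideanSpace ℝ (Fin n))) (hΩ : IsOpen Ω)
    (hbd : Bornology.IsBounded Ω) (C CH : ℝ) (hC : 0 < C) (hCH : 0 < CH) :
    ∃ C' > (0 : ℝ), ∀ δ > (0 : ℝ),
      ∀ u θ : EuclideanSpace ℝ (Fin n) → EuclideanSpace ℝ (Fin n),
      ContDiff ℝ 1 u → (∀ x ∉ Ω, u x = 0) →
      ContDiff ℝ 1 θ →
      (∀ x ∈ Ω, x ∉ {y ∈ Ω | Metric.infDist y (frontier Ω) < δ} → θ x = 0) →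
      (∀ x ∈ {y ∈ Ω | Metric.infDist y (frontier Ω) < δ},
        (Metric.infDist x (frontier Ω)) ^ 2 * ‖fderiv ℝ θ x‖ ≤ C * δ) →
      ((∫ x in {y ∈ Ω | Metric.infDist y (frontier Ω) < δ},
          ‖u x‖ ^ 2 / (Metric.infDist x (frontier Ω)) ^ 2)
        ≤ CH * ∫ x in {y ∈ Ω | Metric.infDist y (frontier Ω) < δ},
            ‖fderiv ℝ u x‖ ^ 2) →
      |∫ x in Ω, inner ℝ (fderiv ℝ θ x (u x)) (u x)|
        ≤ C' * δ * ∫ x in {y ∈ Ω | Metric.infDist y (frontier Ω) < δ},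
            ‖fderiv ℝ u x‖ ^ 2 := by
  refine ⟨C * CH, by positivity, fun δ hδ u θ hu hu0 _ hθ0 hθ hHardy => ?_⟩
  rcases (frontier Ω).eq_empty_or_nonempty with hF | hF
  · rcases frontier_eq_empty_iff.1 hF with rfl | rfl
    · simp
    · have : Subsingleton (EuclideanSpace ℝ (Fin n)) :=
        not_nontrivial_iff_subsingleton.1 fun _ => NormedSpace.unbounded_univ ℝ _ hbd
      simp only [Subsingleton.elim (u _) 0, inner_zero_right, integral_zero, abs_zero]
      exact mul_nonneg (by positivity) (integral_nonneg fun _ => sq_nonneg _)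
  have hu_frontier : ∀ y ∈ frontier Ω, u y = 0 := fun y hy => hu0 y (hΩ.frontier_eq ▸ hy).2
  obtain ⟨K, hK⟩ := hu.lipschitzWith_of_hasCompactSupport
    (.intro hbd.isCompact_closure fun x hx => hu0 x fun hxΩ => hx (subset_closure hxΩ))
    one_ne_zero
  have hΓ_fin : volume (boundaryStrip Ω δ) ≠ ⊤ :=
    ((measure_mono (boundaryStrip_subset Ω δ)).trans_lt hbd.measure_lt_top).ne
  calc |∫ x in Ω, inner ℝ (fderiv ℝ θ x (u x)) (u x)|
      ≤ C * δ * ∫ x in boundaryStrip Ω δ, ‖u x‖ ^ 2 / infDist x (frontier Ω) ^ 2 :=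
        abs_setIntegral_inner_fderiv_le volume hΩ hF hδ hθ0 hθ
          (hK.integrableOn_norm_sq_div_infDist_sq isClosed_frontier hF hu_frontier hΓ_fin)
    _ ≤ C * δ * (CH * ∫ x in boundaryStrip Ω δ, ‖fderiv ℝ u x‖ ^ 2) := by gcongr; exact hHardy
    _ = C * CH * δ * ∫ x in boundaryStrip Ω δ, ‖fderiv ℝ u x‖ ^ 2 := by ring
end

section
/- Let u, F solve (in a classical sense, on Ω × [0,T] with Ω ⊆ ℝⁿ) the transport equation ∂_t F + (u·∇)F = (∇u)F with ∇·u = 0, where F is matrix-valued and (∇u)_{ij} = ∂_j u_i. Then g = ∇·F (the vector with components g_j = Σ_i ∂_i F_{ij}) satisfies the pure transport equation ∂_t g + (u·∇)g = 0. In particular, if ∇·F = 0 at t = 0 and u is smooth so that transport preserves zero initial data, then ∇·F = 0 for all t ∈ [0,T]. -/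
noncomputable def pd {n : ℕ} (i : Fin n) (g : EuclideanSpace ℝ (Fin n) → ℝ)
    (x : EuclideanSpace ℝ (Fin n)) : ℝ :=
  fderiv ℝ g x (EuclideanSpace.single i 1)

/-! Write `R = ∂ₜF + (u·∇)F - (∇u)F` for the residual of the deformation-gradient equation and
`g_j = Σᵢ ∂ᵢF_ij`. Taking the divergence of `R` and commuting the second derivatives of the
`C²` fields gives the pointwise identity
`∂ₜg_j + (u·∇)g_j = Σᵢ ∂ᵢR_ij + Σₖ F_kj ∂ₖ(∇·u)`,
since the two cross terms `Σᵢₖ ∂ᵢu_k ∂ₖF_ij` and `Σᵢₖ ∂ₖu_i ∂ᵢF_kj` agree after swapping `i`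
and `k`. On the open set `Ω` both `R(t, ·)` and `∇·u(t, ·)` vanish identically, hence so do
their spatial derivatives, and `g` solves the pure transport equation. -/

section Calculus

variable {E G : Type*} [NormedAddCommGroup E] [NormedSpace ℝ E]
  [NormedAddCommGroup G] [NormedSpace ℝ G] {f : E → G} {x : E}

theorem fderiv_fderiv_apply (hf : ContDiffAt ℝ 2 f x) (v w : E) :
    fderiv ℝ (fun y => fderiv ℝ f y v) x w = fderiv ℝ (fderiv ℝ f) x w v := by
  have hf' : DifferentiableAt ℝ (fderiv ℝ f) x :=
    (hf.fderiv_right (m := 1) le_rfl).differentiableAt one_ne_zero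
  rw [fderiv_clm_apply hf' (differentiableAt_const v)]
  simp

theorem ContDiff.differentiable_fderiv_apply (hf : ContDiff ℝ 2 f) (v : E) :
    Differentiable ℝ fun y => fderiv ℝ f y v :=
  ((hf.fderiv_right (m := 1) le_rfl).clm_apply contDiff_const).differentiable one_ne_zero

theorem fderiv_fderiv_apply_comm (hf : ContDiffAt ℝ 2 f x) (v w : E) :
    fderiv ℝ (fun y => fderiv ℝ f y v) x w = fderiv ℝ (fun y => fderiv ℝ f y w) x v := by
  rw [fderiv_fderiv_apply hf, fderiv_fderiv_apply hf, hf.isSymmSndFDerivAt (by simp)]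

theorem hasDerivAt_comp_prodMk_left {Φ : ℝ × E → G} {t : ℝ}
    (hΦ : DifferentiableAt ℝ Φ (t, x)) :
    HasDerivAt (fun s => Φ (s, x)) (fderiv ℝ Φ (t, x) (1, 0)) t :=
  hΦ.hasFDerivAt.comp_hasDerivAt t ((hasDerivAt_id t).prodMk (hasDerivAt_const t x))

end Calculus

section PartialDerivative

variable {n : ℕ} {f g : EuclideanSpace ℝ (Fin n) → ℝ} {x : EuclideanSpace ℝ (Fin n)}

theorem pd_add (hf : DifferentiableAt ℝ f x) (hg : DifferentiableAt ℝ g x) (i : Fin n) :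
    pd i (fun y => f y + g y) x = pd i f x + pd i g x := by
  simp [pd, fderiv_fun_add hf hg]

theorem pd_sub (hf : DifferentiableAt ℝ f x) (hg : DifferentiableAt ℝ g x) (i : Fin n) :
    pd i (fun y => f y - g y) x = pd i f x - pd i g x := by
  simp [pd, fderiv_fun_sub hf hg]

theorem pd_mul (hf : DifferentiableAt ℝ f x) (hg : DifferentiableAt ℝ g x) (i : Fin n) :
    pd i (fun y => f y * g y) x = pd i f x * g x + f x * pd i g x := by
  simp only [pd, fderiv_fun_mul hf hg, add_apply, smul_apply, smul_eq_mul]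
  ring

theorem pd_sum {ι : Type*} {s : Finset ι} {A : ι → EuclideanSpace ℝ (Fin n) → ℝ}
    (hA : ∀ k ∈ s, DifferentiableAt ℝ (A k) x) (i : Fin n) :
    pd i (fun y => ∑ k ∈ s, A k y) x = ∑ k ∈ s, pd i (A k) x := by
  simp [pd, fderiv_fun_sum hA]

theorem pd_eq_zero_of_eqOn_zero {s : Set (EuclideanSpace ℝ (Fin n))} (hs : IsOpen s)
    (hx : x ∈ s) (hf : Set.EqOn f 0 s) (i : Fin n) : pd i f x = 0 := by
  simp [pd, (hf.eventuallyEq_of_mem (hs.mem_nhds hx)).fderiv_eq]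

theorem pd_pd_comm (hf : ContDiffAt ℝ 2 f x) (i k : Fin n) :
    pd i (pd k f) x = pd k (pd i f) x :=
  fderiv_fderiv_apply_comm hf _ _

theorem ContDiff.differentiable_pd (hf : ContDiff ℝ 2 f) (k : Fin n) :
    Differentiable ℝ (pd k f) :=
  hf.differentiable_fderiv_apply _

theorem pd_sum_pd_comm {A : Fin n → EuclideanSpace ℝ (Fin n) → ℝ}
    (hA : ∀ i, ContDiff ℝ 2 (A i)) (k : Fin n) :
    pd k (fun y => ∑ i, pd i (A i) y) x = ∑ i, pd i (pd k (A i)) x := by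
  rw [pd_sum fun i _ => (hA i).differentiable_pd i x]
  exact Finset.sum_congr rfl fun i _ => pd_pd_comm (hA i).contDiffAt k i

theorem pd_comp_prodMk_right {Φ : ℝ × EuclideanSpace ℝ (Fin n) → ℝ} {t : ℝ}
    (hΦ : DifferentiableAt ℝ Φ (t, x)) (i : Fin n) :
    pd i (fun y => Φ (t, y)) x = fderiv ℝ Φ (t, x) (0, EuclideanSpace.single i 1) := by
  have h : HasFDerivAt (fun y => Φ (t, y))
      ((fderiv ℝ Φ (t, x)).comp (.inr ℝ ℝ (EuclideanSpace ℝ (Fin n)))) x :=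
    hΦ.hasFDerivAt.comp x (hasFDerivAt_prodMk_right t x)
  simp [pd, h.fderiv]

end PartialDerivative

section Slices

variable {n : ℕ} {Φ : ℝ × EuclideanSpace ℝ (Fin n) → ℝ}

theorem ContDiff.comp_prodMk_right {k : WithTop ℕ∞} (hΦ : ContDiff ℝ k Φ) (t : ℝ) :
    ContDiff ℝ k fun y => Φ (t, y) :=
  hΦ.comp (contDiff_const.prodMk contDiff_id)

theorem deriv_comp_prodMk_left_eq {t : ℝ} {y : EuclideanSpace ℝ (Fin n)}
    (hΦ : DifferentiableAt ℝ Φ (t, y)) :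
    deriv (fun s => Φ (s, y)) t = fderiv ℝ Φ (t, y) (1, 0) :=
  (hasDerivAt_comp_prodMk_left hΦ).deriv

theorem ContDiff.differentiable_deriv_comp_prodMk_left (hΦ : ContDiff ℝ 2 Φ) (t : ℝ) :
    Differentiable ℝ fun y => deriv (fun s => Φ (s, y)) t := by
  rw [funext fun y => deriv_comp_prodMk_left_eq (hΦ.differentiable two_ne_zero (t, y))]
  exact (hΦ.differentiable_fderiv_apply (1, 0)).comp
    ((differentiable_const t).prodMk differentiable_id)

theorem hasDerivAt_pd_comp_prodMk_right (hΦ : ContDiff ℝ 2 Φ) (t : ℝ)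
    (x : EuclideanSpace ℝ (Fin n)) (i : Fin n) :
    HasDerivAt (fun s => pd i (fun y => Φ (s, y)) x)
      (pd i (fun y => deriv (fun s => Φ (s, y)) t) x) t := by
  have hpd : (fun s => pd i (fun y => Φ (s, y)) x)
      = fun s => fderiv ℝ Φ (s, x) (0, EuclideanSpace.single i 1) :=
    funext fun s => pd_comp_prodMk_right (hΦ.differentiable two_ne_zero _) i
  have hderiv : (fun y => deriv (fun s => Φ (s, y)) t) = fun y => fderiv ℝ Φ (t, y) (1, 0) :=
    funext fun y => deriv_comp_prodMk_left_eq (hΦ.differentiable two_ne_zero _)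
  rw [hpd, hderiv, pd_comp_prodMk_right (hΦ.differentiable_fderiv_apply _ _),
    ← fderiv_fderiv_apply_comm hΦ.contDiffAt]
  exact hasDerivAt_comp_prodMk_left (hΦ.differentiable_fderiv_apply _ _)

end Slices

section Deformation

variable {n : ℕ} (u : ℝ → EuclideanSpace ℝ (Fin n) → EuclideanSpace ℝ (Fin n))
  (F : ℝ → EuclideanSpace ℝ (Fin n) → Fin n → Fin n → ℝ)

noncomputable def deformationResidual (t : ℝ) (y : EuclideanSpace ℝ (Fin n)) (i j : Fin n) :
    ℝ :=
  deriv (fun s => F s y i j) t + ∑ k, u t y k * pd k (fun z => F t z i j) y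
    - ∑ k, pd k (fun z => u t z i) y * F t y k j

variable {u F}

theorem pd_deformationResidual
    (hu : ∀ i, ContDiff ℝ 2 fun p : ℝ × EuclideanSpace ℝ (Fin n) => u p.1 p.2 i)
    (hF : ∀ i j, ContDiff ℝ 2 fun p : ℝ × EuclideanSpace ℝ (Fin n) => F p.1 p.2 i j)
    (t : ℝ) (x : EuclideanSpace ℝ (Fin n)) (i j : Fin n) :
    pd i (fun y => deformationResidual u F t y i j) x
      = pd i (fun y => deriv (fun s => F s y i j) t) x
        + ∑ k, (pd i (fun y => u t y k) x * pd k (fun y => F t y i j) x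
          + u t x k * pd i (pd k fun y => F t y i j) x)
        - ∑ k, (pd i (pd k fun y => u t y i) x * F t x k j
          + pd k (fun y => u t y i) x * pd i (fun y => F t y k j) x) := by
  have hu' k : ContDiff ℝ 2 fun y => u t y k := (hu k).comp_prodMk_right t
  have hF' k l : ContDiff ℝ 2 fun y => F t y k l := (hF k l).comp_prodMk_right t
  have hdu k : Differentiable ℝ fun y => u t y k := (hu' k).differentiable two_ne_zero
  have hdF k l : Differentiable ℝ fun y => F t y k l := (hF' k l).differentiable two_ne_zero
  have hdt : Differentiable ℝ fun y => deriv (fun s => F s y i j) t :=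
    (hF i j).differentiable_deriv_comp_prodMk_left t
  have hpdu k : Differentiable ℝ (pd k fun y => u t y i) := (hu' i).differentiable_pd k
  have hpdF k : Differentiable ℝ (pd k fun y => F t y i j) := (hF' i j).differentiable_pd k
  have hadv k : DifferentiableAt ℝ (fun y => u t y k * pd k (fun z => F t z i j) y) x :=
    ((hdu k).fun_mul (hpdF k)) x
  have hstr k : DifferentiableAt ℝ (fun y => pd k (fun z => u t z i) y * F t y k j) x :=
    ((hpdu k).fun_mul (hdF k j)) x
  unfold deformationResidual
  rw [pd_sub ((hdt x).fun_add (.fun_sum fun k _ => hadv k)) (.fun_sum fun k _ => hstr k),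
    pd_add (hdt x) (.fun_sum fun k _ => hadv k), pd_sum fun k _ => hadv k,
    pd_sum fun k _ => hstr k]
  simp only [pd_mul (hdu _ x) (hpdF _ x), pd_mul (hpdu _ x) (hdF _ j x)]

theorem transport_colDiv_eq
    (hu : ∀ i, ContDiff ℝ 2 fun p : ℝ × EuclideanSpace ℝ (Fin n) => u p.1 p.2 i)
    (hF : ∀ i j, ContDiff ℝ 2 fun p : ℝ × EuclideanSpace ℝ (Fin n) => F p.1 p.2 i j)
    (t : ℝ) (x : EuclideanSpace ℝ (Fin n)) (j : Fin n) :
    deriv (fun s => ∑ i, pd i (fun y => F s y i j) x) t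
        + ∑ k, u t x k * pd k (fun y => ∑ i, pd i (fun z => F t z i j) y) x
      = ∑ i, pd i (fun y => deformationResidual u F t y i j) x
        + ∑ k, F t x k j * pd k (fun y => ∑ i, pd i (fun z => u t z i) y) x := by
  have htime : deriv (fun s => ∑ i, pd i (fun y => F s y i j) x) t
      = ∑ i, pd i (fun y => deriv (fun s => F s y i j) t) x :=
    (HasDerivAt.fun_sum fun i _ => hasDerivAt_pd_comp_prodMk_right (hF i j) t x i).deriv
  have hu' i : ContDiff ℝ 2 fun y => u t y i := (hu i).comp_prodMk_right t
  have hF' i : ContDiff ℝ 2 fun y => F t y i j := (hF i j).comp_prodMk_right t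
  have hcross : ∑ i, ∑ k, pd i (fun y => u t y k) x * pd k (fun y => F t y i j) x
      = ∑ i, ∑ k, pd k (fun y => u t y i) x * pd i (fun y => F t y k j) x := by
    rw [Finset.sum_comm]
  have hadv : ∑ i, ∑ k, u t x k * pd i (pd k fun y => F t y i j) x
      = ∑ k, ∑ i, u t x k * pd i (pd k fun y => F t y i j) x :=
    Finset.sum_comm
  have hstr : ∑ i, ∑ k, pd i (pd k fun y => u t y i) x * F t x k j
      = ∑ k, ∑ i, F t x k j * pd i (pd k fun y => u t y i) x := by
    rw [Finset.sum_comm]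
    simp only [mul_comm]
  rw [htime]
  simp only [pd_sum_pd_comm hF', pd_sum_pd_comm hu', pd_deformationResidual hu hF,
    Finset.sum_add_distrib, Finset.sum_sub_distrib, Finset.mul_sum]
  rw [hcross, hadv, hstr]
  ring

end Deformation

theorem div_deformation_tensor_transported_general {n : ℕ} (T : ℝ)
    (Ω : Set (EuclideanSpace ℝ (Fin n))) (hΩ : IsOpen Ω)
    (u : ℝ → EuclideanSpace ℝ (Fin n) → EuclideanSpace ℝ (Fin n))
    (F : ℝ → EuclideanSpace ℝ (Fin n) → Fin n → Fin n → ℝ)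
    (hu : ∀ i, ContDiff ℝ 2 fun p : ℝ × EuclideanSpace ℝ (Fin n) => u p.1 p.2 i)
    (hF : ∀ i j, ContDiff ℝ 2 fun p : ℝ × EuclideanSpace ℝ (Fin n) => F p.1 p.2 i j)
    (hdiv : ∀ t ∈ Set.Icc 0 T, ∀ x ∈ Ω, ∑ k, pd k (fun y => u t y k) x = 0)
    (heq : ∀ t ∈ Set.Icc 0 T, ∀ x ∈ Ω, ∀ i j,
      deriv (fun s => F s x i j) t + ∑ k, u t x k * pd k (fun y => F t y i j) x
        = ∑ k, pd k (fun y => u t y i) x * F t x k j)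
    (htransport : ∀ g : ℝ → EuclideanSpace ℝ (Fin n) → ℝ,
      (∀ t ∈ Set.Icc 0 T, ∀ x ∈ Ω,
        deriv (fun s => g s x) t + ∑ k, u t x k * pd k (g t) x = 0) →
      (∀ x ∈ Ω, g 0 x = 0) → ∀ t ∈ Set.Icc 0 T, ∀ x ∈ Ω, g t x = 0)
    (h0 : ∀ x ∈ Ω, ∀ j, ∑ i, pd i (fun y => F 0 y i j) x = 0) :
    (∀ t ∈ Set.Icc 0 T, ∀ x ∈ Ω, ∀ j,
      deriv (fun s => ∑ i, pd i (fun y => F s y i j) x) t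
        + ∑ k, u t x k * pd k (fun y => ∑ i, pd i (fun z => F t z i j) y) x = 0) ∧
    (∀ t ∈ Set.Icc 0 T, ∀ x ∈ Ω, ∀ j, ∑ i, pd i (fun y => F t y i j) x = 0) := by
  have htransported : ∀ t ∈ Set.Icc 0 T, ∀ x ∈ Ω, ∀ j,
      deriv (fun s => ∑ i, pd i (fun y => F s y i j) x) t
        + ∑ k, u t x k * pd k (fun y => ∑ i, pd i (fun z => F t z i j) y) x = 0 := by
    intro t ht x hx j
    have hres : ∀ i, pd i (fun y => deformationResidual u F t y i j) x = 0 := fun i =>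
      pd_eq_zero_of_eqOn_zero hΩ hx (fun y hy => sub_eq_zero.2 (heq t ht y hy i j)) i
    have hdivu : ∀ k, pd k (fun y => ∑ i, pd i (fun z => u t z i) y) x = 0 :=
      pd_eq_zero_of_eqOn_zero hΩ hx (hdiv t ht)
    rw [transport_colDiv_eq hu hF]
    simp [hres, hdivu]
  exact ⟨htransported, fun t ht x hx j =>
    htransport _ (fun t ht x hx => htransported t ht x hx j) (fun x hx => h0 x hx j) t ht x hx⟩

/-- If `F` solves the deformation-gradient equation `∂ₜF + (u·∇)F = (∇u)F` with `∇·u = 0`,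
then the (column-wise) divergence `g_j = Σᵢ ∂ᵢ F_{ij}` solves the pure transport equation
`∂ₜ g + (u·∇)g = 0`. In particular, if `∇·F = 0` at `t = 0` and transport preserves zero
initial data, then `∇·F = 0` on `[0,T]`. -/
theorem div_deformation_tensor_transported {n : ℕ} (T : ℝ) (hT : 0 < T)
    (Ω : Set (EuclideanSpace ℝ (Fin n))) (hΩ : IsOpen Ω)
    (u : ℝ → EuclideanSpace ℝ (Fin n) → EuclideanSpace ℝ (Fin n))
    (F : ℝ → EuclideanSpace ℝ (Fin n) → Fin n → Fin n → ℝ)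
    (hu : ∀ i, ContDiff ℝ 2 fun p : ℝ × EuclideanSpace ℝ (Fin n) => u p.1 p.2 i)
    (hF : ∀ i j, ContDiff ℝ 2 fun p : ℝ × EuclideanSpace ℝ (Fin n) => F p.1 p.2 i j)
    (hdiv : ∀ t ∈ Set.Icc 0 T, ∀ x ∈ Ω, ∑ k, pd k (fun y => u t y k) x = 0)
    (heq : ∀ t ∈ Set.Icc 0 T, ∀ x ∈ Ω, ∀ i j,
      deriv (fun s => F s x i j) t + ∑ k, u t x k * pd k (fun y => F t y i j) x
        = ∑ k, pd k (fun y => u t y i) x * F t x k j)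
    (htransport : ∀ g : ℝ → EuclideanSpace ℝ (Fin n) → ℝ,
      (∀ t ∈ Set.Icc 0 T, ∀ x ∈ Ω,
        deriv (fun s => g s x) t + ∑ k, u t x k * pd k (g t) x = 0) →
      (∀ x ∈ Ω, g 0 x = 0) → ∀ t ∈ Set.Icc 0 T, ∀ x ∈ Ω, g t x = 0)
    (h0 : ∀ x ∈ Ω, ∀ j, ∑ i, pd i (fun y => F 0 y i j) x = 0) :
    (∀ t ∈ Set.Icc 0 T, ∀ x ∈ Ω, ∀ j,
      deriv (fun s => ∑ i, pd i (fun y => F s y i j) x) t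
        + ∑ k, u t x k * pd k (fun y => ∑ i, pd i (fun z => F t z i j) y) x = 0) ∧
    (∀ t ∈ Set.Icc 0 T, ∀ x ∈ Ω, ∀ j, ∑ i, pd i (fun y => F t y i j) x = 0) :=
  div_deformation_tensor_transported_general T Ω hΩ u F hu hF hdiv heq htransport h0
end
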